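/- With the notation of time reversal ($\breve{h}_s = h_{T-s}$, $\breve{B}_s = B_{T-s}-B_T$), for every $u \in [0,T]$ one has $\int_0^u h_s\,\overleftarrow{dB}_s = -\int_{T-u}^T \breve{h}_s\, d\breve{B}_s$. -/
import Mathlib


open MeasureTheory ProbabilityTheory Finset

/-- A standard Brownian motion on `[0,T]`. -/
structure IsStandardBM {Ω : Type*} [MeasurableSpace Ω] (P : Measure Ω) (T : ℝ)
    (B : ℝ → Ω → ℝ) : Prop where
  meas : ∀ t ∈ Set.Icc (0 : ℝ) T, Measurable (B t)
  cont : ∀ᵐ ω ∂P, ContinuousOn (fun t => B t ω) (Set.Icc 0 T)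
  init : ∀ᵐ ω ∂P, B 0 ω = 0
  gaussian : ∀ (k : ℕ) (t : Fin k → ℝ) (c : Fin k → ℝ),
    (∀ i, t i ∈ Set.Icc (0 : ℝ) T) →
    ∃ v : NNReal, Measure.map (fun ω => ∑ i, c i * B (t i) ω) P = gaussianReal 0 v
  cov : ∀ s ∈ Set.Icc (0 : ℝ) T, ∀ t ∈ Set.Icc (0 : ℝ) T,
    ∫ ω, B s ω * B t ω ∂P = min s t

/-- Right-endpoint (backward Itô) Riemann sum of `h` against `B` along the
partition `t 0 < t 1 < ⋯ < t n`. -/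
noncomputable def backwardRiemannSum {Ω : Type*} {F : Type*}
    [AddCommGroup F] [Module ℝ F] (B : ℝ → Ω → ℝ) (h : ℝ → Ω → F)
    (n : ℕ) (t : Fin (n + 1) → ℝ) (ω : Ω) : F :=
  ∑ i : Fin n, (B (t i.succ) ω - B (t i.castSucc) ω) • h (t i.succ) ω

/-- Left-endpoint (forward Itô) Riemann sum of `h` against `B`. -/
noncomputable def forwardRiemannSum {Ω : Type*} {F : Type*}
    [AddCommGroup F] [Module ℝ F] (B : ℝ → Ω → ℝ) (h : ℝ → Ω → F)
    (n : ℕ) (t : Fin (n + 1) → ℝ) (ω : Ω) : F :=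
  ∑ i : Fin n, (B (t i.succ) ω - B (t i.castSucc) ω) • h (t i.castSucc) ω

/-- `I` is the backward Itô integral `∫_a^b h_s ←dB_s`: the right-endpoint
Riemann sums converge to `I` in `L²(Ω, P)` as the mesh tends to `0`. -/
def IsBackwardItoIntegral {Ω : Type*} [MeasurableSpace Ω] (P : Measure Ω)
    {F : Type*} [NormedAddCommGroup F] [NormedSpace ℝ F]
    (B : ℝ → Ω → ℝ) (h : ℝ → Ω → F) (a b : ℝ) (I : Ω → F) : Prop :=
  ∀ ε > (0 : ℝ), ∃ δ > (0 : ℝ), ∀ (n : ℕ) (t : Fin (n + 1) → ℝ),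
    Monotone t → t 0 = a → t (Fin.last n) = b →
    (∀ i : Fin n, t i.succ - t i.castSucc < δ) →
    ∫ ω, ‖backwardRiemannSum B h n t ω - I ω‖ ^ 2 ∂P < ε

/-- `I` is the forward Itô integral `∫_a^b h_s dB_s`: the left-endpoint Riemann
sums converge to `I` in `L²(Ω, P)` as the mesh tends to `0`. -/
def IsForwardItoIntegral {Ω : Type*} [MeasurableSpace Ω] (P : Measure Ω)
    {F : Type*} [NormedAddCommGroup F] [NormedSpace ℝ F]
    (B : ℝ → Ω → ℝ) (h : ℝ → Ω → F) (a b : ℝ) (I : Ω → F) : Prop :=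
  ∀ ε > (0 : ℝ), ∃ δ > (0 : ℝ), ∀ (n : ℕ) (t : Fin (n + 1) → ℝ),
    Monotone t → t 0 = a → t (Fin.last n) = b →
    (∀ i : Fin n, t i.succ - t i.castSucc < δ) →
    ∫ ω, ‖forwardRiemannSum B h n t ω - I ω‖ ^ 2 ∂P < ε

/-- The backward σ-algebra `𝓕ᴮ_{t,T} = σ{B_r - B_T : t ≤ r ≤ T}`. -/
def backwardSigma {Ω : Type*} (B : ℝ → Ω → ℝ) (t T : ℝ) : MeasurableSpace Ω :=
  ⨆ r ∈ Set.Icc t T, MeasurableSpace.comap (fun ω => B r ω - B T ω) inferInstance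

lemma forward_rev_eq {Ω F : Type*} [AddCommGroup F] [Module ℝ F]
    (T : ℝ) (B : ℝ → Ω → ℝ) (h : ℝ → Ω → F) (n : ℕ) (t : Fin (n + 1) → ℝ) (ω : Ω) :
    forwardRiemannSum (fun s ω => B (T - s) ω - B T ω) (fun s ω => h (T - s) ω)
      n (fun j => T - t j.rev) ω = - backwardRiemannSum B h n t ω := by
  unfold forwardRiemannSum backwardRiemannSum
  rw [← Finset.sum_neg_distrib]
  refine Fintype.sum_equiv (Fin.revPerm) _ _ fun i => ?_
  simp only [Fin.revPerm_apply, sub_sub_cancel, Fin.rev_succ, Fin.rev_castSucc, Fin.rev_rev]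
  rw [← neg_smul]
  ring_nf

/-- Time-reversal identity: with `h̆_s = h_{T-s}` and `B̆_s = B_{T-s} - B_T`,
for every `u ∈ [0,T]` one has `∫_0^u h_s ←dB_s = -∫_{T-u}^T h̆_s dB̆_s`. -/
theorem backward_ito_on_initial_interval_eq_neg_forward_reversed
    {Ω : Type*} [MeasurableSpace Ω] (P : Measure Ω) [IsProbabilityMeasure P]
    (T : ℝ) (B : ℝ → Ω → ℝ) (hB : IsStandardBM P T B)
    {m : ℕ} (h : ℝ → Ω → EuclideanSpace ℝ (Fin m))
    (hadapt : ∀ s ∈ Set.Icc (0 : ℝ) T, Measurable[backwardSigma B s T] (h s))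
    (hsq : ∫⁻ ω, ∫⁻ s in Set.Icc (0 : ℝ) T,
        ENNReal.ofReal (‖h s ω‖ ^ 2) ∂MeasureTheory.volume ∂P < ⊤)
    (u : ℝ) (hu : u ∈ Set.Icc (0 : ℝ) T) (I : Ω → EuclideanSpace ℝ (Fin m)) :
    IsBackwardItoIntegral P B h 0 u I ↔
      IsForwardItoIntegral P (fun s ω => B (T - s) ω - B T ω)
        (fun s ω => h (T - s) ω) (T - u) T (fun ω => -I ω) := by
  constructor
  · intro hbk ε hε
    obtain ⟨δ, hδ, hδ'⟩ := hbk ε hε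
    refine ⟨δ, hδ, fun n s hmono h0 hlast hmesh => ?_⟩
    set t : Fin (n + 1) → ℝ := fun j => T - s j.rev with ht
    have hst : s = fun j => T - t j.rev := by
      funext j; simp [ht, Fin.rev_rev]
    have htmono : Monotone t := fun i j hij => by
      simp only [ht]
      have := hmono (Fin.rev_le_rev.mpr hij)
      linarith
    have ht0 : t 0 = 0 := by simp [ht, Fin.rev_zero, hlast]
    have htlast : t (Fin.last n) = u := by simp [ht, Fin.rev_last, h0]
    have htmesh : ∀ i : Fin n, t i.succ - t i.castSucc < δ := fun i => by
      simp only [ht, Fin.rev_succ, Fin.rev_castSucc]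
      have := hmesh i.rev
      linarith
    calc ∫ ω, ‖forwardRiemannSum (fun s ω => B (T - s) ω - B T ω)
            (fun s ω => h (T - s) ω) n s ω - (-I ω)‖ ^ 2 ∂P
        = ∫ ω, ‖backwardRiemannSum B h n t ω - I ω‖ ^ 2 ∂P := by
          refine integral_congr_ae (.of_forall fun ω => ?_)
          beta_reduce; rw [hst, forward_rev_eq, neg_sub_neg, norm_sub_rev]
      _ < ε := hδ' n t htmono ht0 htlast htmesh
  · intro hfw ε hε
    obtain ⟨δ, hδ, hδ'⟩ := hfw ε hε
    refine ⟨δ, hδ, fun n t hmono h0 hlast hmesh => ?_⟩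
    set s : Fin (n + 1) → ℝ := fun j => T - t j.rev with hs
    have hsmono : Monotone s := fun i j hij => by
      simp only [hs]
      have := hmono (Fin.rev_le_rev.mpr hij)
      linarith
    have hs0 : s 0 = T - u := by simp [hs, Fin.rev_zero, hlast]
    have hslast : s (Fin.last n) = T := by simp [hs, Fin.rev_last, h0]
    have hsmesh : ∀ i : Fin n, s i.succ - s i.castSucc < δ := fun i => by
      simp only [hs, Fin.rev_succ, Fin.rev_castSucc]
      have := hmesh i.rev
      linarith
    calc ∫ ω, ‖backwardRiemannSum B h n t ω - I ω‖ ^ 2 ∂P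
        = ∫ ω, ‖forwardRiemannSum (fun s ω => B (T - s) ω - B T ω)
            (fun s ω => h (T - s) ω) n s ω - (-I ω)‖ ^ 2 ∂P := by
          refine integral_congr_ae (.of_forall fun ω => ?_)
          beta_reduce; rw [hs, forward_rev_eq, neg_sub_neg, norm_sub_rev]
      _ < ε := hδ' n s hsmono hs0 hslast hsmesh
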